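/- arXiv:1005.1957 — 2 statements merged into one kernel-verified Lean document; each statement's English description precedes it below -/
import Mathlib

section
/- Set ρ := sup_{i,j∈ℕ} ∑_{k∈ℕ} |p(i,k) − p(j,k)| and δ₀ := inf_{i,j∈ℕ} ∑_{k∈ℕ} p(i,k)p(j,k). Then: (i) for every stochastic matrix p on ℕ, ρ ≤ 2(1 − δ₀), so δ₀ > 0 implies ρ < 2; (ii) if in addition the family of rows {p(i,·)}_{i∈ℕ} is tight, i.e. lim_{n→∞} sup_{i∈ℕ} ∑_{k>n} p(i,k) = 0, then conversely ρ < 2 implies δ₀ > 0. -/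
open MeasureTheory Filter

/-- `n`-step transition probabilities of the matrix `p`. -/
noncomputable def matPow (p : ℕ → ℕ → ℝ) : ℕ → ℕ → ℕ → ℝ
  | 0 => fun i j => if i = j then 1 else 0
  | n + 1 => fun i j => ∑' k, matPow p n i k * p k j

/-- An ergodic (irreducible, aperiodic, positive recurrent) Markov transition matrix `p`
on `ℕ` with stationary distribution `pi`. -/
structure IsErgodicChain (p : ℕ → ℕ → ℝ) (pi : ℕ → ℝ) : Prop where
  nonneg : ∀ i k, 0 ≤ p i k
  rowSum : ∀ i, HasSum (p i) 1
  piPos : ∀ k, 0 < pi k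
  piSum : HasSum pi 1
  piStat : ∀ k, HasSum (fun i => pi i * p i k) (pi k)
  irred : ∀ i j, ∃ n, 0 < matPow p n i j
  aperiodic : ∀ i, ∃ N, ∀ n, N ≤ n → 0 < matPow p n i i

/-- `P i` is the law on path space of the Markov chain with transition matrix `p`
started at `X(0) = i`: it is specified by its finite-dimensional distributions. -/
def IsChainLaw (p : ℕ → ℕ → ℝ) (P : ℕ → Measure (ℕ → ℕ)) : Prop :=
  (∀ i, IsProbabilityMeasure (P i)) ∧
  ∀ i m (path : ℕ → ℕ),
    P i {ω | ∀ t ≤ m, ω t = path t} =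
      (if path 0 = i then (1 : ENNReal) else 0) *
        ENNReal.ofReal (∏ t ∈ Finset.range m, p (path t) (path (t + 1)))

/-- Positive hitting time `T(S) = min {t ≥ 1 : X(t) ∈ S}` (with value `0` if `S` is never hit). -/
noncomputable def hitTime (S : Set ℕ) (ω : ℕ → ℕ) : ℕ :=
  sInf {t | 1 ≤ t ∧ ω t ∈ S}

/-- `π(S) = ∑_{k ∈ S} π(k)`. -/
noncomputable def setMass (pi : ℕ → ℝ) (S : Set ℕ) : ℝ := ∑' k, S.indicator pi k

/-- Tightness of the family of rows: `sup_i ∑_{k > n} p(i,k) → 0`. -/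
def TightChain (p : ℕ → ℕ → ℝ) : Prop :=
  Tendsto (fun n : ℕ => ⨆ i, ∑' k, {k : ℕ | n < k}.indicator (p i) k) atTop (nhds 0)

/-- `p(S) = sup_i p(i,S) = sup_i ∑_{k ∈ S} p(i,k)`. -/
noncomputable def pSup (p : ℕ → ℕ → ℝ) (S : Set ℕ) : ℝ :=
  ⨆ i, ∑' k, S.indicator (p i) k

/-- `δ₀ = inf_{i,j} ∑_k p(i,k) p(j,k)`. -/
noncomputable def delta0 (p : ℕ → ℕ → ℝ) : ℝ :=
  ⨅ i, ⨅ j, ∑' k, p i k * p j k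

/-- (Section 3) With `ρ = sup_{i,j} ∑_k |p(i,k) − p(j,k)|` and
`δ₀ = inf_{i,j} ∑_k p(i,k)p(j,k)`: (i) always `ρ ≤ 2(1 − δ₀)`, so `δ₀ > 0` implies `ρ < 2`;
(ii) if the rows of `p` are tight, then conversely `ρ < 2` implies `δ₀ > 0`. -/
theorem rho_lt_two_iff_delta0_pos
    (p : ℕ → ℕ → ℝ) (hpos : ∀ i k, 0 ≤ p i k) (hrow : ∀ i, HasSum (p i) 1) :
    ((⨆ i, ⨆ j, ∑' k, |p i k - p j k|) ≤ 2 * (1 - delta0 p)) ∧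
    (0 < delta0 p → (⨆ i, ⨆ j, ∑' k, |p i k - p j k|) < 2) ∧
    (TightChain p → (⨆ i, ⨆ j, ∑' k, |p i k - p j k|) < 2 → 0 < delta0 p) := by
  have hle1 : ∀ i k, p i k ≤ 1 := fun i k =>
    le_hasSum (hrow i) k fun j _ => hpos i j
  have hs : ∀ i, Summable (p i) := fun i => (hrow i).summable
  have hprodS : ∀ i j, Summable (fun k => p i k * p j k) := fun i j =>
    Summable.of_nonneg_of_le (fun k => mul_nonneg (hpos i k) (hpos j k))
      (fun k => mul_le_of_le_one_left (hpos j k) (hle1 i k)) (hs j)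
  have hprod_nonneg : ∀ i j, (0:ℝ) ≤ ∑' k, p i k * p j k := fun i j =>
    tsum_nonneg fun k => mul_nonneg (hpos i k) (hpos j k)
  have habsS : ∀ i j, Summable (fun k => |p i k - p j k|) := fun i j =>
    Summable.of_nonneg_of_le (fun k => abs_nonneg _)
      (fun k => by rw [abs_sub_le_iff]; constructor <;>
        nlinarith [hpos i k, hpos j k]) ((hs i).add (hs j))
  have key : ∀ i j, (∑' k, |p i k - p j k|) ≤ 2 * (1 - ∑' k, p i k * p j k) := by
    intro i j
    have h1 : HasSum (fun k => p i k + p j k - 2 * (p i k * p j k))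
        (1 + 1 - 2 * ∑' k, p i k * p j k) :=
      ((hrow i).add (hrow j)).sub ((hprodS i j).hasSum.mul_left 2)
    have h2 : (∑' k, |p i k - p j k|) ≤
        ∑' k, (p i k + p j k - 2 * (p i k * p j k)) := by
      refine Summable.tsum_le_tsum (fun k => ?_) (habsS i j) h1.summable
      rw [abs_sub_le_iff]
      constructor <;> nlinarith [hpos i k, hpos j k, hle1 i k, hle1 j k]
    rw [h1.tsum_eq] at h2
    linarith
  have hinf_le : ∀ i j, delta0 p ≤ ∑' k, p i k * p j k := by
    intro i j
    have hbb1 : BddBelow (Set.range fun j => ∑' k, p i k * p j k) :=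
      ⟨0, by rintro x ⟨j', rfl⟩; exact hprod_nonneg i j'⟩
    have h1 : (⨅ j, ∑' k, p i k * p j k) ≤ ∑' k, p i k * p j k := ciInf_le hbb1 j
    refine le_trans (ciInf_le ⟨0, ?_⟩ i) h1
    rintro x ⟨i', rfl⟩
    exact le_ciInf fun j' => hprod_nonneg i' j'
  have part1 : (⨆ i, ⨆ j, ∑' k, |p i k - p j k|) ≤ 2 * (1 - delta0 p) := by
    refine ciSup_le fun i => ciSup_le fun j => ?_
    have h1 := key i j
    have h2 := hinf_le i j
    linarith
  refine ⟨part1, fun hδ0 => by linarith, ?_⟩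
  intro htight hρ
  set ρ := ⨆ i, ⨆ j, ∑' k, |p i k - p j k| with hρdef
  have habs_le2 : ∀ i j, (∑' k, |p i k - p j k|) ≤ 2 := fun i j =>
    (key i j).trans (by nlinarith [hprod_nonneg i j])
  have hT_le : ∀ i j, (∑' k, |p i k - p j k|) ≤ ρ := by
    intro i j
    have h1 : (∑' k, |p i k - p j k|) ≤ ⨆ j, ∑' k, |p i k - p j k| :=
      le_ciSup (f := fun j => ∑' k, |p i k - p j k|)
        ⟨2, by rintro x ⟨j', rfl⟩; exact habs_le2 i j'⟩ j
    refine h1.trans (le_ciSup (f := fun i => ⨆ j, ∑' k, |p i k - p j k|) ⟨2, ?_⟩ i)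
    rintro x ⟨i', rfl⟩
    exact ciSup_le fun j' => habs_le2 i' j'
  have hmS : ∀ i j, Summable (fun k => min (p i k) (p j k)) := fun i j =>
    Summable.of_nonneg_of_le (fun k => le_min (hpos i k) (hpos j k))
      (fun k => min_le_left _ _) (hs i)
  have habs_eq : ∀ i j, (∑' k, |p i k - p j k|) =
      2 - 2 * ∑' k, min (p i k) (p j k) := by
    intro i j
    have h1 : HasSum (fun k => p i k + p j k - 2 * min (p i k) (p j k))
        (1 + 1 - 2 * ∑' k, min (p i k) (p j k)) :=
      ((hrow i).add (hrow j)).sub ((hmS i j).hasSum.mul_left 2)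
    have h2 : (fun k => p i k + p j k - 2 * min (p i k) (p j k)) =
        fun k => |p i k - p j k| := by
      funext k
      rcases le_total (p i k) (p j k) with h | h
      · rw [min_eq_left h, abs_of_nonpos (by linarith)]; ring
      · rw [min_eq_right h, abs_of_nonneg (by linarith)]; ring
    rw [h2] at h1
    rw [h1.tsum_eq]; ring
  have hδ : 0 < 1 - ρ / 2 := by linarith
  set δ := 1 - ρ / 2 with hδdef
  have hmin_ge : ∀ i j, δ ≤ ∑' k, min (p i k) (p j k) := by
    intro i j
    have h1 := hT_le i j
    rw [habs_eq i j] at h1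
    rw [hδdef]; linarith
  obtain ⟨n, hn⟩ : ∃ n, (⨆ i, ∑' k, {k : ℕ | n < k}.indicator (p i) k) < δ / 2 :=
    (htight.eventually_lt_const (by positivity)).exists
  have htail : ∀ i, (∑' k, {k : ℕ | n < k}.indicator (p i) k) < δ / 2 := by
    intro i
    refine lt_of_le_of_lt
      (le_ciSup (f := fun i => ∑' k, {k : ℕ | n < k}.indicator (p i) k) ⟨1, ?_⟩ i) hn
    rintro x ⟨i', rfl⟩
    calc (∑' k, {k : ℕ | n < k}.indicator (p i') k) ≤ ∑' k, p i' k :=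
          Summable.tsum_le_tsum
            (fun k => Set.indicator_apply_le' (fun _ => le_rfl) (fun _ => hpos i' k))
            ((hs i').indicator _) (hs i')
      _ = 1 := (hrow i').tsum_eq
  have hset : (((Finset.range (n+1) : Finset ℕ) : Set ℕ))ᶜ = {k : ℕ | n < k} := by
    ext k
    simp only [Set.mem_compl_iff, Finset.coe_range, Set.mem_Iio, not_lt, Set.mem_setOf_eq]
    omega
  have hfin2 : ∀ i j, (δ/2)^2 / (n+1) ≤ ∑' k, p i k * p j k := by
    intro i j
    have hsum := Summable.sum_add_tsum_compl (s := Finset.range (n+1)) (hmS i j)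
    rw [hset] at hsum
    have h1 : (∑' (k : {k : ℕ | n < k}), min (p i (k:ℕ)) (p j (k:ℕ))) ≤
        ∑' (k : {k : ℕ | n < k}), p i (k:ℕ) :=
      Summable.tsum_le_tsum (fun k => min_le_left _ _)
        ((hmS i j).subtype _) ((hs i).subtype _)
    have h2 : (∑' (k : {k : ℕ | n < k}), p i (k:ℕ)) =
        ∑' k, {k : ℕ | n < k}.indicator (p i) k := tsum_subtype _ _
    have htail_m : (∑' (k : {k : ℕ | n < k}), min (p i (k:ℕ)) (p j (k:ℕ))) ≤ δ / 2 := by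
      have h3 := htail i
      rw [h2] at h1
      linarith
    have hfin : δ/2 ≤ ∑ k ∈ Finset.range (n+1), min (p i k) (p j k) := by
      have h4 := hmin_ge i j
      have h6 : (∑' (k : {k : ℕ | n < k}), min (p i (k:ℕ)) (p j (k:ℕ))) =
          ∑' (x : ↑{k : ℕ | n < k}), p i ↑x ⊓ p j ↑x := rfl
      have hsum' : (∑ k ∈ Finset.range (n+1), min (p i k) (p j k)) +
          (∑' (k : {k : ℕ | n < k}), min (p i (k:ℕ)) (p j (k:ℕ))) =
          ∑' k, min (p i k) (p j k) := hsum
      have h9 : (∑ k ∈ Finset.range (n+1), min (p i k) (p j k)) =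
          (∑' k, min (p i k) (p j k)) -
            ∑' (k : {k : ℕ | n < k}), min (p i (k:ℕ)) (p j (k:ℕ)) :=
        eq_sub_of_add_eq hsum'
      rw [h9]
      have h10 := sub_le_sub h4 htail_m
      calc δ / 2 = δ - δ / 2 := by ring
        _ ≤ _ := h10
    have hCS : (∑ k ∈ Finset.range (n+1), min (p i k) (p j k))^2 ≤
        (∑ k ∈ Finset.range (n+1), (min (p i k) (p j k))^2) * (n+1 : ℝ) := by
      have h5 := Finset.sum_mul_sq_le_sq_mul_sq (Finset.range (n+1))
        (fun k => min (p i k) (p j k)) (fun _ => (1:ℝ))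
      simpa using h5
    have hsq : ∀ k, (min (p i k) (p j k))^2 ≤ p i k * p j k := by
      intro k
      rcases le_total (p i k) (p j k) with h | h
      · rw [min_eq_left h]; nlinarith [hpos i k]
      · rw [min_eq_right h]; nlinarith [hpos j k]
    have hsum_sq_le : (∑ k ∈ Finset.range (n+1), (min (p i k) (p j k))^2) ≤
        ∑ k ∈ Finset.range (n+1), p i k * p j k :=
      Finset.sum_le_sum fun k _ => hsq k
    have hfs_le_tsum : (∑ k ∈ Finset.range (n+1), p i k * p j k) ≤
        ∑' k, p i k * p j k :=
      Summable.sum_le_tsum _ (fun k _ => mul_nonneg (hpos i k) (hpos j k)) (hprodS i j)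
    have hn1 : (0:ℝ) < (n:ℝ)+1 := by positivity
    rw [div_le_iff₀ hn1]
    nlinarith [hfin, hCS, hsum_sq_le, hfs_le_tsum, hδ,
      mul_le_mul_of_nonneg_right hsum_sq_le (le_of_lt hn1),
      mul_le_mul_of_nonneg_right hfs_le_tsum (le_of_lt hn1)]
  have hc : (0:ℝ) < (δ/2)^2/((n:ℝ)+1) := by positivity
  refine lt_of_lt_of_le hc ?_
  exact le_ciInf fun i => le_ciInf fun j => hfin2 i j
end

section
/- Let the chain be a t.e.m. chain and let (S_n) be nonempty subsets of ℕ with π(S_n) → 0. Set ε_n := sup_{i∈S_n^c} p(i,S_n) and let P_n = (p(i,k))_{i,k∈S_n^c} be the substochastic matrix of transitions within S_n^c = ℕ∖S_n. Then for all n sufficiently large, P_n has an eigenvalue λ_n ∈ [1 − ε_n, 1) with a corresponding eigenvector f_n : S_n^c → ℝ (that is, ∑_{k∈S_n^c} p(i,k) f_n(k) = λ_n f_n(i) for all i ∈ S_n^c) satisfying 1 ≤ f_n(i) ≤ 1/(1 − (6/δ₀)ε_n) for all i ∈ S_n^c. -/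
open MeasureTheory Filter

/-- `ε_n = sup_{i ∈ Sᶜ} p(i, S)`. -/
noncomputable def epsSup (p : ℕ → ℕ → ℝ) (S : Set ℕ) : ℝ :=
  ⨆ i : ↥(Sᶜ), ∑' k, S.indicator (p (i : ℕ)) k

/-!
Restricted to `Sᶜ`, the chain is a substochastic kernel `Q` whose rows have mass at least
`1 - ε` and pairwise overlap at least `δ - ε`, where `δ = δ₀`. Let `g_t = Qᵗ 1`. The ratio
`g_{t+1}(i) / g_t(i)` is an average of the ratios `g_t / g_{t-1}`, taken against weights that
overlap in mass at least `(δ - ε)/2` while `g_t` varies by at most a factor `2`. By Dobrushin's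
argument the oscillation of the ratios then contracts geometrically. Summing these oscillations
shows that `g_t` varies by at most a factor `exp (2ε / ((1 - ε)(δ - ε))) ≤ 1 / (1 - 6ε/δ)`,
which closes the induction. Hence `g_t / g_t(i₀)` converges to a positive eigenvector, and its
eigenvalue `λ = lim g_{t+1}(i₀) / g_t(i₀)` lies in `[1 - ε, 1]`.

If `λ = 1`, the eigenvector extended by `0` on `S` is a bounded subharmonic function. Pairing
with the stationary law `π` makes it harmonic. It vanishes on `S`, so irreducibility forces it
to vanish everywhere, which is a contradiction. Finally, tightness together with `π(S_n) → 0`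
pushes `S_n` beyond any finite set, so `ε_n` is small compared to `δ₀` for large `n`.
-/

open Set Topology

theorem abs_le_of_mem_Icc {a M : ℝ} (h : a ∈ Icc 0 M) : |a| ≤ M :=
  (abs_of_nonneg h.1).trans_le h.2

theorem summable_mul_of_abs_le {κ : Type*} {q u : κ → ℝ} {M : ℝ} (hq : Summable q)
    (hq0 : ∀ k, 0 ≤ q k) (hu : ∀ k, |u k| ≤ M) : Summable fun k => q k * u k :=
  (hq.mul_right M).of_norm_bounded fun k => by
    rw [Real.norm_eq_abs, abs_mul, abs_of_nonneg (hq0 k)]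
    exact mul_le_mul_of_nonneg_left (hu k) (hq0 k)

theorem exp_le_two_of_le_half {x : ℝ} (h : x ≤ 1 / 2) : Real.exp x ≤ 2 :=
  (Real.exp_le_exp.2 h).trans
    ((Real.exp_bound_div_one_sub_of_interval (by norm_num) (by norm_num)).trans (by norm_num))

theorem tsum_mul_sub_tsum_mul_le {κ : Type*} {w₁ w₂ ν u : κ → ℝ} {a D : ℝ}
    (h₁ : HasSum w₁ 1) (h₂ : HasSum w₂ 1) (hν : ∀ k, 0 ≤ ν k) (hν₁ : ∀ k, ν k ≤ w₁ k)
    (hν₂ : ∀ k, ν k ≤ w₂ k) (hu : ∀ k, u k ∈ Icc a (a + D)) :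
    ∑' k, w₁ k * u k - ∑' k, w₂ k * u k ≤ (1 - ∑' k, ν k) * D := by
  set v := fun k => u k - a
  have hv : ∀ k, v k ∈ Icc 0 D := fun k => by
    simp only [v, mem_Icc]; constructor <;> linarith [(hu k).1, (hu k).2]
  have summable_mul_v : ∀ w : κ → ℝ, Summable w → (∀ k, 0 ≤ w k) → Summable fun k => w k * v k :=
    fun w hw hw0 => summable_mul_of_abs_le hw hw0 fun k => abs_le_of_mem_Icc (hv k)
  have shift : ∀ w : κ → ℝ, HasSum w 1 → (∀ k, ν k ≤ w k) →
      ∑' k, w k * u k = ∑' k, w k * v k + a := by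
    intro w hw hνw
    rw [← mul_one a, ← hw.tsum_eq, ← tsum_mul_left,
      ← (summable_mul_v w hw.summable fun k => (hν k).trans (hνw k)).tsum_add
        (hw.summable.mul_left a)]
    exact tsum_congr fun k => by simp only [v]; ring
  have hνs : Summable ν := h₁.summable.of_nonneg_of_le hν hν₁
  have hw₁ν : Summable fun k => w₁ k - ν k := h₁.summable.sub hνs
  calc ∑' k, w₁ k * u k - ∑' k, w₂ k * u k
      = ∑' k, w₁ k * v k - ∑' k, w₂ k * v k := by rw [shift w₁ h₁ hν₁, shift w₂ h₂ hν₂]; ring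
    _ ≤ ∑' k, w₁ k * v k - ∑' k, ν k * v k := by
        refine sub_le_sub_left (Summable.tsum_le_tsum
          (fun k => mul_le_mul_of_nonneg_right (hν₂ k) (hv k).1) (summable_mul_v ν hνs hν)
          (summable_mul_v w₂ h₂.summable fun k => (hν k).trans (hν₂ k))) _
    _ = ∑' k, (w₁ k - ν k) * v k := by
        rw [← Summable.tsum_sub (summable_mul_v w₁ h₁.summable fun k => (hν k).trans (hν₁ k))
          (summable_mul_v ν hνs hν)]
        exact tsum_congr fun k => by ring
    _ ≤ ∑' k, (w₁ k - ν k) * D :=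
        Summable.tsum_le_tsum
          (fun k => mul_le_mul_of_nonneg_left (hv k).2 (sub_nonneg.2 (hν₁ k)))
          (summable_mul_v _ hw₁ν fun k => sub_nonneg.2 (hν₁ k)) (hw₁ν.mul_right D)
    _ = (1 - ∑' k, ν k) * D := by rw [tsum_mul_right, h₁.summable.tsum_sub hνs, h₁.tsum_eq]

theorem exists_forall_mem_Icc_of_sub_le {κ : Type*} [Nonempty κ] {u : κ → ℝ} {D : ℝ}
    (h : ∀ k l, u k - u l ≤ D) : ∃ a, ∀ k, u k ∈ Icc a (a + D) := by
  obtain ⟨k₀⟩ := ‹Nonempty κ›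
  have hbdd : BddBelow (range u) := ⟨u k₀ - D, by
    rintro _ ⟨l, rfl⟩
    linarith [h k₀ l]⟩
  refine ⟨⨅ l, u l, fun k => ⟨ciInf_le hbdd k, ?_⟩⟩
  have : u k - D ≤ ⨅ l, u l := le_ciInf fun l => by linarith [h k l]
  linarith

theorem exists_mul_mem_Icc_of_le_mul {κ : Type*} {φ : κ → ℝ} {K : ℝ}
    (hK : ∀ i j, φ i ≤ K * φ j) {i₀ : κ} (h₀ : 0 < φ i₀) : ∃ c, ∀ i, c * φ i ∈ Icc 1 K := by
  have hK0 : 0 < K := by nlinarith [hK i₀ i₀]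
  have hlow : ∀ j, φ i₀ / K ≤ φ j := fun j => by
    rw [div_le_iff₀ hK0]; linarith [hK i₀ j]
  have : Nonempty κ := ⟨i₀⟩
  have hbdd : BddBelow (range φ) := ⟨_, forall_mem_range.2 hlow⟩
  have hm : 0 < ⨅ j, φ j := (div_pos h₀ hK0).trans_le (le_ciInf hlow)
  refine ⟨(⨅ j, φ j)⁻¹, fun i => ⟨?_, ?_⟩⟩
  · rw [← div_eq_inv_mul, one_le_div hm]
    exact ciInf_le hbdd i
  · have : φ i / K ≤ ⨅ j, φ j := le_ciInf fun j => by
      rw [div_le_iff₀ hK0]; linarith [hK i j]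
    rw [← div_eq_inv_mul, div_le_iff₀ hm]
    exact (div_le_iff₀' hK0).1 this

section Kernel

variable {ι : Type*} {Q : ι → ι → ℝ}

noncomputable def tsumMulVec (Q : ι → ι → ℝ) (u : ι → ℝ) (i : ι) : ℝ :=
  ∑' k, Q i k * u k

theorem tsumMulVec_const_mul (c : ℝ) (u : ι → ℝ) (i : ι) :
    tsumMulVec Q (fun k => c * u k) i = c * tsumMulVec Q u i := by
  rw [tsumMulVec, tsumMulVec, ← tsum_mul_left]
  exact tsum_congr fun k => by ring

theorem tsumMulVec_mem_Icc (hQ0 : ∀ i k, 0 ≤ Q i k) (hQs : ∀ i, Summable (Q i))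
    (hQ1 : ∀ i, ∑' k, Q i k ≤ 1) {u : ι → ℝ} {M : ℝ} (hu : ∀ k, u k ∈ Icc 0 M) (i : ι) :
    tsumMulVec Q u i ∈ Icc 0 M := by
  refine ⟨tsum_nonneg fun k => mul_nonneg (hQ0 i k) (hu k).1, ?_⟩
  calc tsumMulVec Q u i ≤ ∑' k, Q i k * M :=
        Summable.tsum_le_tsum (fun k => mul_le_mul_of_nonneg_left (hu k).2 (hQ0 i k))
          (summable_mul_of_abs_le (hQs i) (hQ0 i) fun k => abs_le_of_mem_Icc (hu k))
          ((hQs i).mul_right M)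
    _ = (∑' k, Q i k) * M := tsum_mul_right
    _ ≤ M := mul_le_of_le_one_left ((hu i).1.trans (hu i).2) (hQ1 i)

/-- For the chain killed on leaving `Sᶜ`, `survival Q t i` is the probability of surviving
`t` steps from `i`. -/
noncomputable def survival (Q : ι → ι → ℝ) : ℕ → ι → ℝ
  | 0 => 1
  | t + 1 => tsumMulVec Q (survival Q t)

noncomputable def survivalRatio (Q : ι → ι → ℝ) (t : ℕ) (i : ι) : ℝ :=
  survival Q (t + 1) i / survival Q t i

structure IsDobrushinKernel (Q : ι → ι → ℝ) (ε β : ℝ) : Prop where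
  nonneg : ∀ i k, 0 ≤ Q i k
  summable : ∀ i, Summable (Q i)
  one_sub_le_tsum : ∀ i, 1 - ε ≤ ∑' k, Q i k
  tsum_le_one : ∀ i, ∑' k, Q i k ≤ 1
  le_tsum_min : ∀ i j, β ≤ ∑' k, min (Q i k) (Q j k)

namespace IsDobrushinKernel

variable {ε β : ℝ}

theorem eps_nonneg (hQ : IsDobrushinKernel Q ε β) [Nonempty ι] : 0 ≤ ε := by
  obtain ⟨i⟩ := ‹Nonempty ι›
  linarith [hQ.one_sub_le_tsum i, hQ.tsum_le_one i]

theorem overlap_le_one (hQ : IsDobrushinKernel Q ε β) [Nonempty ι] : β ≤ 1 := by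
  obtain ⟨i⟩ := ‹Nonempty ι›
  calc β ≤ ∑' k, min (Q i k) (Q i k) := hQ.le_tsum_min i i
    _ = ∑' k, Q i k := by simp only [min_self]
    _ ≤ 1 := hQ.tsum_le_one i

theorem summable_mul (hQ : IsDobrushinKernel Q ε β) {u : ι → ℝ} {M : ℝ} (hu : ∀ k, |u k| ≤ M)
    (i : ι) : Summable fun k => Q i k * u k :=
  summable_mul_of_abs_le (hQ.summable i) (hQ.nonneg i) hu

theorem tsumMulVec_mono (hQ : IsDobrushinKernel Q ε β) {u v : ι → ℝ} {M : ℝ}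
    (hu : ∀ k, |u k| ≤ M) (hv : ∀ k, |v k| ≤ M) (huv : ∀ k, u k ≤ v k) (i : ι) :
    tsumMulVec Q u i ≤ tsumMulVec Q v i :=
  Summable.tsum_le_tsum (fun k => mul_le_mul_of_nonneg_left (huv k) (hQ.nonneg i k))
    (hQ.summable_mul hu i) (hQ.summable_mul hv i)

theorem survival_mem_Icc (hQ : IsDobrushinKernel Q ε β) (t : ℕ) (i : ι) :
    survival Q t i ∈ Icc (0 : ℝ) 1 := by
  induction t generalizing i with
  | zero => simp [survival]
  | succ t ih => exact tsumMulVec_mem_Icc hQ.nonneg hQ.summable hQ.tsum_le_one ih i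

theorem abs_survival_le_one (hQ : IsDobrushinKernel Q ε β) (t : ℕ) (i : ι) :
    |survival Q t i| ≤ 1 :=
  abs_le_of_mem_Icc (hQ.survival_mem_Icc t i)

theorem survival_succ_le (hQ : IsDobrushinKernel Q ε β) (t : ℕ) (i : ι) :
    survival Q (t + 1) i ≤ survival Q t i := by
  induction t generalizing i with
  | zero => exact (hQ.survival_mem_Icc 1 i).2
  | succ t ih =>
    exact hQ.tsumMulVec_mono (hQ.abs_survival_le_one _) (hQ.abs_survival_le_one _) ih i

theorem one_sub_mul_survival_le (hQ : IsDobrushinKernel Q ε β) (t : ℕ) (i : ι) :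
    (1 - ε) * survival Q t i ≤ survival Q (t + 1) i := by
  induction t generalizing i with
  | zero => simpa [survival, tsumMulVec] using hQ.one_sub_le_tsum i
  | succ t ih =>
    have hbd : ∀ k, |(1 - ε) * survival Q t k| ≤ |1 - ε| + 1 := fun k => by
      rw [abs_mul]
      nlinarith [abs_nonneg (1 - ε), hQ.abs_survival_le_one t k, abs_nonneg (survival Q t k)]
    rw [survival, ← tsumMulVec_const_mul]
    exact hQ.tsumMulVec_mono hbd
      (fun k => (hQ.abs_survival_le_one _ k).trans (by linarith [abs_nonneg (1 - ε)])) ih i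

theorem survival_pos (hQ : IsDobrushinKernel Q ε β) (hε : ε < 1) (t : ℕ) (i : ι) :
    0 < survival Q t i := by
  induction t generalizing i with
  | zero => simp [survival]
  | succ t ih =>
    exact (mul_pos (by linarith) (ih i)).trans_le (hQ.one_sub_mul_survival_le t i)

theorem survivalRatio_mem_Icc (hQ : IsDobrushinKernel Q ε β) (hε : ε < 1) (t : ℕ) (i : ι) :
    survivalRatio Q t i ∈ Icc (1 - ε) 1 := by
  have hg := hQ.survival_pos hε t i
  rw [survivalRatio, mem_Icc, le_div_iff₀ hg, div_le_one hg]
  exact ⟨hQ.one_sub_mul_survival_le t i, hQ.survival_succ_le t i⟩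

theorem survival_succ_eq_mul (hQ : IsDobrushinKernel Q ε β) (hε : ε < 1) (t : ℕ) (i : ι) :
    survival Q (t + 1) i = survival Q t i * survivalRatio Q t i := by
  rw [survivalRatio, mul_div_cancel₀ _ (hQ.survival_pos hε t i).ne']

theorem survivalRatio_succ_sub_le (hQ : IsDobrushinKernel Q ε β) (hε : ε < 1) {t : ℕ} {D : ℝ}
    (hD : ∀ k l, survivalRatio Q t k - survivalRatio Q t l ≤ D)
    (hg : ∀ k l, survival Q t k ≤ 2 * survival Q t l) (i j : ι) :
    survivalRatio Q (t + 1) i - survivalRatio Q (t + 1) j ≤ (1 - β / 2) * D := by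
  have : Nonempty ι := ⟨i⟩
  obtain ⟨a, ha⟩ := exists_forall_mem_Icc_of_sub_le hD
  have hpos := hQ.survival_pos hε
  set w : ι → ι → ℝ := fun i k => Q i k * survival Q t k / survival Q (t + 1) i
  have hw : ∀ i, HasSum (w i) 1 := fun i => by
    have h := (hQ.summable_mul (hQ.abs_survival_le_one t) i).hasSum.div_const
      (survival Q (t + 1) i)
    rwa [← tsumMulVec, ← survival, div_self (hpos (t + 1) i).ne'] at h
  have havg : ∀ i, survivalRatio Q (t + 1) i = ∑' k, w i k * survivalRatio Q t k := fun i => by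
    rw [survivalRatio, survival, tsumMulVec, ← tsum_div_const]
    refine tsum_congr fun k => ?_
    simp only [w, survivalRatio]
    field_simp [(hpos t k).ne']
  have hQw : ∀ i k, Q i k / 2 ≤ w i k := fun i k => by
    rw [div_le_div_iff₀ two_pos (hpos (t + 1) i)]
    calc Q i k * survival Q (t + 1) i ≤ Q i k * (2 * survival Q t k) :=
          mul_le_mul_of_nonneg_left ((hQ.survival_succ_le t i).trans (hg i k)) (hQ.nonneg i k)
      _ = _ := by ring
  have hν : β / 2 ≤ ∑' k, min (Q i k) (Q j k) / 2 := by
    rw [tsum_div_const]; linarith [hQ.le_tsum_min i j]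
  have hD0 : 0 ≤ D := by linarith [(ha i).1, (ha i).2]
  rw [havg, havg]
  refine (tsum_mul_sub_tsum_mul_le (hw i) (hw j)
    (fun k => by have := le_min (hQ.nonneg i k) (hQ.nonneg j k); positivity)
    (fun k => (div_le_div_of_nonneg_right (min_le_left _ _) zero_le_two).trans (hQw i k))
    (fun k => (div_le_div_of_nonneg_right (min_le_right _ _) zero_le_two).trans (hQw j k))
    ha).trans ?_
  exact mul_le_mul_of_nonneg_right (by linarith) hD0

theorem survival_succ_le_mul_exp (hQ : IsDobrushinKernel Q ε β) (hε : ε < 1) {t : ℕ} {K D : ℝ}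
    (hg : ∀ k l, survival Q t k ≤ K * survival Q t l)
    (hD : ∀ k l, survivalRatio Q t k - survivalRatio Q t l ≤ D) (i j : ι) :
    survival Q (t + 1) i ≤ K * Real.exp (D / (1 - ε)) * survival Q (t + 1) j := by
  have hD0 : 0 ≤ D := by linarith [hD j j]
  have hrj := hQ.survivalRatio_mem_Icc hε t j
  have hgi := hQ.survival_pos hε t i
  have hK : 0 ≤ K * survival Q t j := hgi.le.trans (hg i j)
  have hratio : survivalRatio Q t i ≤ survivalRatio Q t j * Real.exp (D / (1 - ε)) :=
    calc survivalRatio Q t i ≤ survivalRatio Q t j + D := by linarith [hD i j]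
      _ ≤ survivalRatio Q t j * (D / (1 - ε) + 1) := by
          have : D ≤ survivalRatio Q t j * (D / (1 - ε)) :=
            calc D = (1 - ε) * (D / (1 - ε)) := (mul_div_cancel₀ D (by linarith)).symm
              _ ≤ _ := mul_le_mul_of_nonneg_right hrj.1 (div_nonneg hD0 (by linarith))
          linarith
      _ ≤ survivalRatio Q t j * Real.exp (D / (1 - ε)) :=
          mul_le_mul_of_nonneg_left (Real.add_one_le_exp _) (by linarith [hrj.1])
  calc survival Q (t + 1) i = survival Q t i * survivalRatio Q t i := hQ.survival_succ_eq_mul hε t i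
    _ ≤ (K * survival Q t j) * (survivalRatio Q t j * Real.exp (D / (1 - ε))) :=
        mul_le_mul (hg i j) hratio (by linarith [(hQ.survivalRatio_mem_Icc hε t i).1]) hK
    _ = K * Real.exp (D / (1 - ε)) * survival Q (t + 1) j := by
        rw [hQ.survival_succ_eq_mul hε t j]; ring

theorem pow_rate_mem_Icc (hQ : IsDobrushinKernel Q ε β) [Nonempty ι] (hβ : 0 < β) (t : ℕ) :
    (1 - β / 2) ^ t ∈ Icc (0 : ℝ) 1 :=
  ⟨pow_nonneg (by linarith [hQ.overlap_le_one]) t,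
    pow_le_one₀ (by linarith [hQ.overlap_le_one]) (by linarith)⟩

theorem mul_one_sub_pow_rate_le (hQ : IsDobrushinKernel Q ε β) [Nonempty ι] (hε : ε < 1)
    (hβ : 0 < β) (t : ℕ) :
    2 * ε / ((1 - ε) * β) * (1 - (1 - β / 2) ^ t) ≤ 2 * ε / ((1 - ε) * β) :=
  mul_le_of_le_one_right
    (div_nonneg (by linarith [hQ.eps_nonneg]) (mul_nonneg (by linarith) hβ.le))
    (by linarith [(hQ.pow_rate_mem_Icc hβ t).1])

/-- The two estimates feed each other: while `survival Q t` varies by at most a factor `2`, each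
step contracts the oscillation of the ratios by `1 - β/2`, and the summed oscillations bound the
variation of `survival Q t` by `exp (2ε / ((1 - ε)β)) ≤ 2`. -/
theorem survivalRatio_sub_le_and_survival_le (hQ : IsDobrushinKernel Q ε β) (hε : ε < 1)
    (hβ : 0 < β) (hC : 2 * ε / ((1 - ε) * β) ≤ 1 / 2) (t : ℕ) :
    (∀ i j, survivalRatio Q t i - survivalRatio Q t j ≤ ε * (1 - β / 2) ^ t) ∧
    ∀ i j, survival Q t i ≤
      Real.exp (2 * ε / ((1 - ε) * β) * (1 - (1 - β / 2) ^ t)) * survival Q t j := by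
  induction t with
  | zero =>
    refine ⟨fun i j => ?_, fun i j => by simp [survival]⟩
    have hi := hQ.survivalRatio_mem_Icc hε 0 i
    have hj := hQ.survivalRatio_mem_Icc hε 0 j
    simp only [mem_Icc] at hi hj
    linarith
  | succ t ih =>
    obtain ⟨hD, hg⟩ := ih
    refine ⟨fun i j => ?_, fun i j => ?_⟩
    · have : Nonempty ι := ⟨i⟩
      have h2 : ∀ k l, survival Q t k ≤ 2 * survival Q t l := fun k l =>
        (hg k l).trans (mul_le_mul_of_nonneg_right
          (exp_le_two_of_le_half ((hQ.mul_one_sub_pow_rate_le hε hβ t).trans hC))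
          (hQ.survival_pos hε t l).le)
      calc _ ≤ (1 - β / 2) * (ε * (1 - β / 2) ^ t) := hQ.survivalRatio_succ_sub_le hε hD h2 i j
        _ = ε * (1 - β / 2) ^ (t + 1) := by ring
    · refine (hQ.survival_succ_le_mul_exp hε hg hD i j).trans_eq ?_
      rw [← Real.exp_add]
      congr 2
      field_simp [(by linarith : 1 - ε ≠ 0), hβ.ne']
      ring

theorem survival_le_exp_mul (hQ : IsDobrushinKernel Q ε β) (hε : ε < 1) (hβ : 0 < β)
    (hC : 2 * ε / ((1 - ε) * β) ≤ 1 / 2) (t : ℕ) (i j : ι) :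
    survival Q t i ≤ Real.exp (2 * ε / ((1 - ε) * β)) * survival Q t j := by
  have : Nonempty ι := ⟨i⟩
  exact ((hQ.survivalRatio_sub_le_and_survival_le hε hβ hC t).2 i j).trans
    (mul_le_mul_of_nonneg_right (Real.exp_le_exp.2 (hQ.mul_one_sub_pow_rate_le hε hβ t))
      (hQ.survival_pos hε t j).le)

theorem cauchySeq_survival_div (hQ : IsDobrushinKernel Q ε β) (hε : ε < 1) (hβ : 0 < β)
    (hC : 2 * ε / ((1 - ε) * β) ≤ 1 / 2) (i i₀ : ι) :
    CauchySeq fun t => survival Q t i / survival Q t i₀ := by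
  have : Nonempty ι := ⟨i⟩
  refine cauchySeq_of_le_geometric (1 - β / 2)
    (Real.exp (2 * ε / ((1 - ε) * β)) * (ε / (1 - ε))) (by linarith) fun t => ?_
  have hpos := hQ.survival_pos hε
  have hr := hQ.survivalRatio_mem_Icc hε t i₀
  have hr₀ : 0 < survivalRatio Q t i₀ := by linarith [hr.1]
  have hdiv : survival Q t i / survival Q t i₀ ≤ Real.exp (2 * ε / ((1 - ε) * β)) := by
    rw [div_le_iff₀ (hpos t i₀)]
    simpa using hQ.survival_le_exp_mul hε hβ hC t i i₀
  have hosc : |survivalRatio Q t i₀ - survivalRatio Q t i| / survivalRatio Q t i₀ ≤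
      ε / (1 - ε) * (1 - β / 2) ^ t := by
    have h := hQ.survivalRatio_sub_le_and_survival_le hε hβ hC t
    rw [div_le_iff₀ hr₀, div_mul_eq_mul_div, mul_comm, ← mul_div_assoc,
      le_div_iff₀ (by linarith : 0 < 1 - ε)]
    calc |survivalRatio Q t i₀ - survivalRatio Q t i| * (1 - ε)
        ≤ ε * (1 - β / 2) ^ t * survivalRatio Q t i₀ :=
          mul_le_mul (abs_sub_le_iff.2 ⟨h.1 i₀ i, h.1 i i₀⟩) hr.1 (by linarith)
            (mul_nonneg hQ.eps_nonneg (hQ.pow_rate_mem_Icc hβ t).1)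
      _ = _ := by ring
  rw [Real.dist_eq, hQ.survival_succ_eq_mul hε t i, hQ.survival_succ_eq_mul hε t i₀,
    show survival Q t i / survival Q t i₀ -
        survival Q t i * survivalRatio Q t i / (survival Q t i₀ * survivalRatio Q t i₀) =
      survival Q t i / survival Q t i₀ *
        ((survivalRatio Q t i₀ - survivalRatio Q t i) / survivalRatio Q t i₀) by
      field_simp [(hpos t i₀).ne', hr₀.ne'],
    abs_mul, abs_of_pos (div_pos (hpos t i) (hpos t i₀)), abs_div, abs_of_pos hr₀, mul_assoc]
  exact mul_le_mul hdiv hosc (by positivity) (Real.exp_pos _).le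

theorem tsumMulVec_survival_div (hQ : IsDobrushinKernel Q ε β) (hε : ε < 1) (t : ℕ) (i i₀ : ι) :
    tsumMulVec Q (fun k => survival Q t k / survival Q t i₀) i =
      survival Q (t + 1) i / survival Q (t + 1) i₀ * survivalRatio Q t i₀ := by
  simp_rw [div_eq_inv_mul (survival Q t _)]
  rw [tsumMulVec_const_mul, ← survival, survivalRatio]
  field_simp [(hQ.survival_pos hε t i₀).ne', (hQ.survival_pos hε (t + 1) i₀).ne']

theorem tendsto_tsumMulVec (hQ : IsDobrushinKernel Q ε β) {u : ℕ → ι → ℝ} {v : ι → ℝ} {M : ℝ}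
    (hu : ∀ t k, |u t k| ≤ M) (huv : ∀ k, Tendsto (fun t => u t k) atTop (𝓝 (v k))) (i : ι) :
    Tendsto (fun t => tsumMulVec Q (u t) i) atTop (𝓝 (tsumMulVec Q v i)) :=
  tendsto_tsum_of_dominated_convergence (f := fun t k => Q i k * u t k)
    ((hQ.summable i).mul_right M)
    (fun k => (huv k).const_mul _) (Eventually.of_forall fun t k => by
      rw [Real.norm_eq_abs, abs_mul, abs_of_nonneg (hQ.nonneg i k)]
      exact mul_le_mul_of_nonneg_left (hu t k) (hQ.nonneg i k))

theorem exists_eigenvector (hQ : IsDobrushinKernel Q ε β) (hε : ε < 1) (hβ : 0 < β)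
    (hC : 2 * ε / ((1 - ε) * β) ≤ 1 / 2) [Nonempty ι] :
    ∃ lam φ, lam ∈ Icc (1 - ε) 1 ∧ (∀ i, tsumMulVec Q φ i = lam * φ i) ∧
      (∀ i j, φ i ≤ Real.exp (2 * ε / ((1 - ε) * β)) * φ j) ∧ ∃ i₀, φ i₀ = 1 := by
  obtain ⟨i₀⟩ := ‹Nonempty ι›
  have hpos := hQ.survival_pos hε
  choose φ hφ using fun i =>
    cauchySeq_tendsto_of_complete (hQ.cauchySeq_survival_div hε hβ hC i i₀)
  have hbdd : ∀ t k, |survival Q t k / survival Q t i₀| ≤ Real.exp (2 * ε / ((1 - ε) * β)) :=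
    fun t k => by
      rw [abs_of_pos (div_pos (hpos t k) (hpos t i₀)), div_le_iff₀ (hpos t i₀)]
      exact hQ.survival_le_exp_mul hε hβ hC t k i₀
  have hconv := hQ.tendsto_tsumMulVec hbdd hφ
  have hr : Tendsto (fun t => survivalRatio Q t i₀) atTop (𝓝 (tsumMulVec Q φ i₀)) :=
    (hconv i₀).congr fun t => by
      rw [hQ.tsumMulVec_survival_div hε t i₀ i₀, div_self (hpos _ _).ne', one_mul]
  refine ⟨tsumMulVec Q φ i₀, φ, isClosed_Icc.mem_of_tendsto hr
    (Eventually.of_forall fun t => hQ.survivalRatio_mem_Icc hε t i₀), fun i => ?_,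
    fun i j => ?_, i₀, ?_⟩
  · refine tendsto_nhds_unique (hconv i) ?_
    simp_rw [hQ.tsumMulVec_survival_div hε _ i i₀]
    rw [mul_comm]
    exact ((hφ i).comp (tendsto_add_atTop_nat 1)).mul hr
  · refine le_of_tendsto_of_tendsto' (hφ i) ((hφ j).const_mul _) fun t => ?_
    rw [← mul_div_assoc, div_le_div_iff_of_pos_right (hpos t i₀)]
    exact hQ.survival_le_exp_mul hε hβ hC t i j
  · exact tendsto_nhds_unique (hφ i₀) (by simp [div_self (hpos _ i₀).ne'])

theorem exists_eigenvector_mem_Icc (hQ : IsDobrushinKernel Q ε β) (hε : ε < 1) (hβ : 0 < β)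
    (hC : 2 * ε / ((1 - ε) * β) ≤ 1 / 2) [Nonempty ι] :
    ∃ lam f, lam ∈ Icc (1 - ε) 1 ∧ (∀ i, tsumMulVec Q f i = lam * f i) ∧
      ∀ i, f i ∈ Icc 1 (Real.exp (2 * ε / ((1 - ε) * β))) := by
  obtain ⟨lam, φ, hlam, heig, hK, i₀, hφ₀⟩ := hQ.exists_eigenvector hε hβ hC
  obtain ⟨c, hc⟩ := exists_mul_mem_Icc_of_le_mul hK (hφ₀ ▸ one_pos : 0 < φ i₀)
  refine ⟨lam, fun k => c * φ k, hlam, fun i => ?_, hc⟩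
  rw [tsumMulVec_const_mul, heig]
  ring

end IsDobrushinKernel

end Kernel

section Markov

variable {κ : Type*} {p : κ → κ → ℝ} {pi : κ → ℝ}

theorem tsumMulVec_mem_Icc_of_hasSum (hp : ∀ i k, 0 ≤ p i k) (hrow : ∀ i, HasSum (p i) 1)
    {φ : κ → ℝ} {M : ℝ} (hφ : ∀ k, φ k ∈ Icc 0 M) (i : κ) : tsumMulVec p φ i ∈ Icc 0 M :=
  tsumMulVec_mem_Icc hp (fun i => (hrow i).summable) (fun i => (hrow i).tsum_eq.le) hφ i

theorem tsum_mul_tsumMulVec (hp : ∀ i k, 0 ≤ p i k) (hrow : ∀ i, HasSum (p i) 1)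
    (hpi : ∀ k, 0 < pi k) (hpiSum : Summable pi)
    (hstat : ∀ k, HasSum (fun i => pi i * p i k) (pi k)) {φ : κ → ℝ} {M : ℝ}
    (hφ : ∀ k, φ k ∈ Icc 0 M) :
    ∑' i, pi i * tsumMulVec p φ i = ∑' k, pi k * φ k := by
  set F : κ → κ → ℝ := fun i k => pi i * (p i k * φ k)
  have hF : Summable (Function.uncurry F) := by
    refine (summable_prod_of_nonneg fun q =>
      mul_nonneg (hpi q.1).le (mul_nonneg (hp q.1 q.2) (hφ q.2).1)).2
        ⟨fun i => ?_, ?_⟩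
    · exact (summable_mul_of_abs_le (hrow i).summable (hp i)
        fun k => abs_le_of_mem_Icc (hφ k)).mul_left (pi i)
    · simp only [tsum_mul_left]
      exact summable_mul_of_abs_le hpiSum (fun i => (hpi i).le) fun i =>
        abs_le_of_mem_Icc (tsumMulVec_mem_Icc_of_hasSum hp hrow hφ i)
  calc ∑' i, pi i * tsumMulVec p φ i = ∑' i, ∑' k, F i k := by
        simp only [F, tsumMulVec, tsum_mul_left]
    _ = ∑' k, ∑' i, F i k := hF.tsum_comm.symm
    _ = ∑' k, pi k * φ k := tsum_congr fun k => by
        simp only [F, ← mul_assoc, tsum_mul_right, (hstat k).tsum_eq]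

theorem tsumMulVec_eq_of_le_tsumMulVec (hp : ∀ i k, 0 ≤ p i k) (hrow : ∀ i, HasSum (p i) 1)
    (hpi : ∀ k, 0 < pi k) (hpiSum : Summable pi)
    (hstat : ∀ k, HasSum (fun i => pi i * p i k) (pi k)) {φ : κ → ℝ} {M : ℝ}
    (hφ : ∀ k, φ k ∈ Icc 0 M) (hsub : ∀ i, φ i ≤ tsumMulVec p φ i) (i : κ) :
    tsumMulVec p φ i = φ i := by
  refine ((hsub i).lt_or_eq.resolve_left fun hlt => ?_).symm
  have hbdd : ∀ k, |φ k| ≤ M := fun k => abs_le_of_mem_Icc (hφ k)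
  have hPφ := tsumMulVec_mem_Icc_of_hasSum hp hrow hφ
  have := Summable.tsum_lt_tsum (fun k => mul_le_mul_of_nonneg_left (hsub k) (hpi k).le)
    (mul_lt_mul_of_pos_left hlt (hpi i))
    (summable_mul_of_abs_le hpiSum (fun k => (hpi k).le) hbdd)
    (summable_mul_of_abs_le hpiSum (fun k => (hpi k).le)
      fun k => abs_le_of_mem_Icc (hPφ k))
  rw [tsum_mul_tsumMulVec hp hrow hpi hpiSum hstat hφ] at this
  exact lt_irrefl _ this

end Markov

section Restriction

variable {κ : Type*} {p : κ → κ → ℝ}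

theorem tsum_indicator_le_one (hp : ∀ i k, 0 ≤ p i k) (hrow : ∀ i, HasSum (p i) 1)
    (T : Set κ) (i : κ) : ∑' k, T.indicator (p i) k ≤ 1 :=
  (hrow i).tsum_eq ▸ Summable.tsum_le_tsum (indicator_le_self' fun k _ => hp i k)
    ((hrow i).summable.indicator T) (hrow i).summable

theorem tsum_compl_eq_sub {f : κ → ℝ} (hf : Summable f) (S : Set κ) :
    ∑' k : ↥Sᶜ, f k = ∑' k, f k - ∑' k, S.indicator f k := by
  rw [← tsum_subtype, eq_sub_iff_add_eq, add_comm,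
    Summable.tsum_add_tsum_compl (hf.subtype _) (hf.subtype _)]

theorem isDobrushinKernel_restrict (hp : ∀ i k, 0 ≤ p i k) (hrow : ∀ i, HasSum (p i) 1)
    {S : Set κ} {ε δ : ℝ} (hε : ∀ i ∉ S, ∑' k, S.indicator (p i) k ≤ ε)
    (hδ : ∀ i j, δ ≤ ∑' k, min (p i k) (p j k)) :
    IsDobrushinKernel (fun i k : ↥Sᶜ => p i k) ε (δ - ε) where
  nonneg i k := hp i k
  summable i := (hrow i).summable.subtype _
  one_sub_le_tsum i := by
    rw [tsum_compl_eq_sub (hrow i).summable, (hrow i).tsum_eq]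
    linarith [hε i i.2]
  tsum_le_one i := by
    rw [tsum_compl_eq_sub (hrow i).summable, (hrow i).tsum_eq]
    have : 0 ≤ ∑' k, S.indicator (p i) k := tsum_nonneg (indicator_nonneg fun k _ => hp i k)
    linarith
  le_tsum_min i j := by
    have hmin : Summable fun k => min (p i k) (p j k) :=
      (hrow i).summable.of_nonneg_of_le (fun k => le_min (hp i k) (hp j k))
        fun k => min_le_left _ _
    rw [tsum_compl_eq_sub hmin]
    have : ∑' k, S.indicator (fun k => min (p i k) (p j k)) k ≤ ∑' k, S.indicator (p i) k :=
      Summable.tsum_le_tsum (fun k => indicator_le_indicator (min_le_left _ _))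
        (hmin.indicator S) ((hrow i).summable.indicator S)
    linarith [hδ i j, hε i i.2]

theorem exists_extend_eigenvector {A : Set κ} {f : A → ℝ} {lam : ℝ}
    (heig : ∀ i, tsumMulVec (fun i k : A => p i k) f i = lam * f i) :
    ∃ φ : κ → ℝ, (∀ k (hk : k ∈ A), φ k = f ⟨k, hk⟩) ∧ (∀ k ∉ A, φ k = 0) ∧
      ∀ i ∈ A, ∑' k, A.indicator (fun k => p i k * φ k) k = lam * φ i := by
  have hφA : ∀ k (hk : k ∈ A), Function.extend Subtype.val f 0 k = f ⟨k, hk⟩ := fun k hk =>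
    Subtype.val_injective.extend_apply f 0 ⟨k, hk⟩
  refine ⟨Function.extend Subtype.val f 0, hφA,
    fun k hk => Function.extend_apply' _ _ _ fun ⟨a, ha⟩ => hk (ha ▸ a.2), fun i hi => ?_⟩
  rw [← tsum_subtype, hφA i hi, ← heig ⟨i, hi⟩]
  exact tsum_congr fun k => by rw [hφA k k.2]

end Restriction

theorem matPow_nonneg {p : ℕ → ℕ → ℝ} (hp : ∀ i k, 0 ≤ p i k) (n i j : ℕ) :
    0 ≤ matPow p n i j := by
  induction n generalizing j with
  | zero => simp only [matPow]; split_ifs <;> norm_num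
  | succ n ih => exact tsum_nonneg fun l => mul_nonneg (ih l) (hp l j)

theorem eq_zero_of_matPow_pos {p : ℕ → ℕ → ℝ} (hp : ∀ i k, 0 ≤ p i k) {φ : ℕ → ℝ}
    (hφ : ∀ k, 0 ≤ φ k) (hsum : ∀ i, Summable fun k => p i k * φ k)
    (hharm : ∀ i, tsumMulVec p φ i = φ i) {s : ℕ} (hs : φ s = 0) (n k : ℕ)
    (hn : 0 < matPow p n s k) : φ k = 0 := by
  induction n generalizing k with
  | zero =>
    simp only [matPow] at hn
    split_ifs at hn with hsk
    · exact hsk ▸ hs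
    · exact absurd hn (lt_irrefl 0)
  | succ n ih =>
    obtain ⟨l, hl⟩ : ∃ l, 0 < matPow p n s l * p l k := by
      by_contra! h
      exact (tsum_nonpos h).not_gt hn
    have hpos := pos_and_pos_or_neg_and_neg_of_mul_pos hl
    replace hpos := hpos.resolve_right fun h => (matPow_nonneg hp n s l).not_gt h.1
    have hterm : p l k * φ k ≤ 0 := by
      have := (hsum l).le_tsum k fun j _ => mul_nonneg (hp l j) (hφ j)
      rwa [← tsumMulVec, hharm, ih l hpos.1] at this
    exact le_antisymm (nonpos_of_mul_nonpos_right hterm hpos.2) (hφ k)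

theorem eigenvalue_lt_one {p : ℕ → ℕ → ℝ} {pi : ℕ → ℝ} (hp : ∀ i k, 0 ≤ p i k)
    (hrow : ∀ i, HasSum (p i) 1) (hpi : ∀ k, 0 < pi k) (hpiSum : Summable pi)
    (hstat : ∀ k, HasSum (fun i => pi i * p i k) (pi k))
    (hirr : ∀ i j, ∃ n, 0 < matPow p n i j) {S : Set ℕ} {s : ℕ} (hs : s ∈ S) {φ : ℕ → ℝ}
    {M lam : ℝ} (hφ : ∀ k ∉ S, φ k ∈ Icc 0 M) (hφS : ∀ k ∈ S, φ k = 0) {i₀ : ℕ} (hi₀ : φ i₀ ≠ 0)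
    (hlam : lam ≤ 1) (heig : ∀ i ∉ S, ∑' k, Sᶜ.indicator (fun k => p i k * φ k) k = lam * φ i) :
    lam < 1 := by
  refine hlam.lt_of_ne fun h1 => hi₀ ?_
  have hi₀S : i₀ ∉ S := fun h => hi₀ (hφS i₀ h)
  have hφ' : ∀ k, φ k ∈ Icc 0 M := fun k => by
    by_cases hk : k ∈ S
    · rw [hφS k hk]; exact ⟨le_rfl, (hφ i₀ hi₀S).1.trans (hφ i₀ hi₀S).2⟩
    · exact hφ k hk
  have hsub : ∀ i, φ i ≤ tsumMulVec p φ i := fun i => by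
    by_cases hi : i ∈ S
    · rw [hφS i hi]
      exact (tsumMulVec_mem_Icc_of_hasSum hp hrow hφ' i).1
    · rw [← one_mul (φ i), ← h1, ← heig i hi, tsumMulVec]
      refine le_of_eq (tsum_congr fun k => ?_)
      by_cases hk : k ∈ S
      · simp [hk, hφS k hk]
      · simp [hk]
  obtain ⟨n, hn⟩ := hirr s i₀
  exact eq_zero_of_matPow_pos hp (fun k => (hφ' k).1)
    (fun i => summable_mul_of_abs_le (hrow i).summable (hp i)
      fun k => abs_le_of_mem_Icc (hφ' k))
    (tsumMulVec_eq_of_le_tsumMulVec hp hrow hpi hpiSum hstat hφ' hsub) (hφS s hs) n i₀ hn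

theorem delta0_le_tsum_min {p : ℕ → ℕ → ℝ} (hp : ∀ i k, 0 ≤ p i k)
    (hrow : ∀ i, HasSum (p i) 1) (i j : ℕ) : delta0 p ≤ ∑' k, min (p i k) (p j k) := by
  have hprod : ∀ i j, 0 ≤ ∑' k, p i k * p j k := fun i j =>
    tsum_nonneg fun k => mul_nonneg (hp i k) (hp j k)
  have hle_one : ∀ i k, p i k ≤ 1 := fun i k => (hrow i).tsum_eq ▸
    (hrow i).summable.le_tsum k fun l _ => hp i l
  have hmin : ∀ k, p i k * p j k ≤ min (p i k) (p j k) := fun k =>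
    le_min (mul_le_of_le_one_right (hp i k) (hle_one j k))
      (mul_le_of_le_one_left (hp j k) (hle_one i k))
  have hsummin : Summable fun k => min (p i k) (p j k) :=
    (hrow i).summable.of_nonneg_of_le (fun k => le_min (hp i k) (hp j k)) fun k => min_le_left _ _
  calc delta0 p ≤ ⨅ j', ∑' k, p i k * p j' k :=
        ciInf_le ⟨0, forall_mem_range.2 fun i => Real.iInf_nonneg (hprod i)⟩ i
    _ ≤ ∑' k, p i k * p j k := ciInf_le ⟨0, forall_mem_range.2 (hprod i)⟩ j
    _ ≤ ∑' k, min (p i k) (p j k) :=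
        Summable.tsum_le_tsum hmin
          (hsummin.of_nonneg_of_le (fun k => mul_nonneg (hp i k) (hp j k)) hmin) hsummin

theorem le_epsSup {p : ℕ → ℕ → ℝ} (hp : ∀ i k, 0 ≤ p i k) (hrow : ∀ i, HasSum (p i) 1)
    {S : Set ℕ} {i : ℕ} (hi : i ∉ S) : ∑' k, S.indicator (p i) k ≤ epsSup p S :=
  le_ciSup (f := fun i : ↥Sᶜ => ∑' k, S.indicator (p i) k)
    ⟨1, forall_mem_range.2 fun i => tsum_indicator_le_one hp hrow S i⟩ ⟨i, hi⟩

theorem epsSup_le_of_subset {p : ℕ → ℕ → ℝ} (hp : ∀ i k, 0 ≤ p i k)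
    (hrow : ∀ i, HasSum (p i) 1) {S : Set ℕ} {N : ℕ} (hS : S ⊆ {k | N < k}) :
    epsSup p S ≤ ⨆ i, ∑' k, {k : ℕ | N < k}.indicator (p i) k := by
  have : Nonempty ↥Sᶜ := ⟨⟨0, fun h => Nat.not_lt_zero N (hS h)⟩⟩
  refine ciSup_le fun i => ?_
  calc ∑' k, S.indicator (p i) k ≤ ∑' k, {k : ℕ | N < k}.indicator (p i) k :=
        Summable.tsum_le_tsum (indicator_le_indicator_of_subset hS (hp i))
          ((hrow i).summable.indicator _) ((hrow i).summable.indicator _)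
    _ ≤ _ := le_ciSup ⟨1, forall_mem_range.2 (tsum_indicator_le_one hp hrow _)⟩ (i : ℕ)

theorem eventually_subset_of_setMass_tendsto_zero {pi : ℕ → ℝ} (hpi : ∀ k, 0 < pi k)
    (hpiSum : Summable pi) {S : ℕ → Set ℕ}
    (hrare : Tendsto (fun n => setMass pi (S n)) atTop (𝓝 0)) (N : ℕ) :
    ∀ᶠ n in atTop, S n ⊆ {k | N < k} := by
  filter_upwards [(eventually_all_finite (finite_Iic N)).2 fun k _ =>
    hrare.eventually (gt_mem_nhds (hpi k))] with n hn k hk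
  by_contra hkN
  rw [mem_ofPred_eq, not_lt] at hkN
  have hmass := (hpiSum.indicator (S n)).le_tsum k fun l _ =>
    indicator_nonneg (fun l _ => (hpi l).le) l
  rw [indicator_of_mem hk] at hmass
  exact (hn k hkN).not_ge hmass

theorem eventually_zero_notMem_and_epsSup_le {p : ℕ → ℕ → ℝ} {pi : ℕ → ℝ}
    (hp : ∀ i k, 0 ≤ p i k) (hrow : ∀ i, HasSum (p i) 1) (hpi : ∀ k, 0 < pi k)
    (hpiSum : Summable pi) (htight : TightChain p) {S : ℕ → Set ℕ}
    (hrare : Tendsto (fun n => setMass pi (S n)) atTop (𝓝 0)) {η : ℝ} (hη : 0 < η) :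
    ∀ᶠ n in atTop, 0 ∉ S n ∧ epsSup p (S n) ≤ η := by
  obtain ⟨N, hN⟩ := (htight.eventually_lt_const hη).exists
  filter_upwards [eventually_subset_of_setMass_tendsto_zero hpi hpiSum hrare N] with n hn
  exact ⟨fun h => Nat.not_lt_zero N (hn h), (epsSup_le_of_subset hp hrow hn).trans hN.le⟩

theorem two_mul_div_le_six_div_mul {ε δ : ℝ} (hε : 0 ≤ ε) (hεδ : ε ≤ δ / 100) (hδ : δ - ε ≤ 1)
    (hδ0 : 0 < δ) : 2 * ε / ((1 - ε) * (δ - ε)) ≤ 6 / δ * ε := by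
  have hε1 : ε ≤ 1 / 99 := by linarith
  have hden : δ / 3 ≤ (1 - ε) * (δ - ε) := by nlinarith
  rw [div_mul_eq_mul_div, div_le_div_iff₀ (by linarith) hδ0]
  nlinarith

theorem tem_chain_principal_eigenvalue_general
    (p : ℕ → ℕ → ℝ) (pi : ℕ → ℝ)
    (hchain : IsErgodicChain p pi)
    (htight : TightChain p) (hmix : 0 < delta0 p)
    (S : ℕ → Set ℕ) (hne : ∀ n, (S n).Nonempty)
    (hrare : Tendsto (fun n => setMass pi (S n)) atTop (nhds 0)) :
    ∃ n₀ : ℕ, ∀ n ≥ n₀, ∃ lam : ℝ, ∃ f : ℕ → ℝ,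
      (1 - epsSup p (S n) ≤ lam ∧ lam < 1) ∧
      (∀ i ∉ S n, ∑' k, ((S n)ᶜ).indicator (fun k => p i k * f k) k = lam * f i) ∧
      (∀ i ∉ S n, 1 ≤ f i ∧ f i ≤ 1 / (1 - (6 / delta0 p) * epsSup p (S n))) := by
  obtain ⟨hp, hrow, hpi, hpiSum, hstat, hirr, -⟩ := hchain
  obtain ⟨n₀, hn₀⟩ := eventually_atTop.1 (eventually_zero_notMem_and_epsSup_le hp hrow hpi
    hpiSum.summable htight hrare (by positivity : 0 < delta0 p / 100))
  refine ⟨n₀, fun n hn => ?_⟩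
  obtain ⟨h0, hεδ⟩ := hn₀ n hn
  have : Nonempty ↥(S n)ᶜ := ⟨⟨0, h0⟩⟩
  have hQ := isDobrushinKernel_restrict (S := S n) hp hrow (fun i hi => le_epsSup hp hrow hi)
    (delta0_le_tsum_min hp hrow)
  have hC := two_mul_div_le_six_div_mul hQ.eps_nonneg hεδ hQ.overlap_le_one hmix
  have h6 : 6 / delta0 p * epsSup p (S n) ≤ 1 / 2 := by
    rw [div_mul_eq_mul_div, div_le_iff₀ hmix]; linarith
  obtain ⟨lam, f, hlam, heig, hf⟩ := hQ.exists_eigenvector_mem_Icc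
    (by linarith [hQ.overlap_le_one]) (by linarith) (hC.trans h6)
  obtain ⟨φ, hφA, hφS, hφeig⟩ := exists_extend_eigenvector heig
  have hφ : ∀ k (hk : k ∈ (S n)ᶜ), φ k ∈ Icc 1 _ := fun k hk => hφA k hk ▸ hf ⟨k, hk⟩
  obtain ⟨s, hs⟩ := hne n
  refine ⟨lam, φ, ⟨hlam.1, eigenvalue_lt_one hp hrow hpi hpiSum.summable hstat hirr hs
    (fun k hk => Icc_subset_Icc zero_le_one le_rfl (hφ k hk)) (fun k hk => hφS k (not_not.2 hk))
    (one_pos.trans_le (hφ 0 h0).1).ne' hlam.2 hφeig⟩, hφeig, fun i hi => ⟨(hφ i hi).1, ?_⟩⟩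
  exact (hφ i hi).2.trans ((Real.exp_le_exp.2 hC).trans
    (Real.exp_bound_div_one_sub_of_interval (mul_nonneg (by positivity) hQ.eps_nonneg)
      (by linarith)))

/-- (Lemma 3.2) For a t.e.m. chain and rare nonempty sets `S_n`, for all `n` large enough the
substochastic matrix `P_n = (p(i,k))_{i,k ∈ S_nᶜ}` has an eigenvalue `λ_n ∈ [1 − ε_n, 1)`
with an eigenvector `f_n` satisfying `1 ≤ f_n(i) ≤ 1/(1 − (6/δ₀) ε_n)` on `S_nᶜ`. -/
theorem tem_chain_principal_eigenvalue
    (p : ℕ → ℕ → ℝ) (pi : ℕ → ℝ) (P : ℕ → Measure (ℕ → ℕ))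
    (hchain : IsErgodicChain p pi) (hlaw : IsChainLaw p P)
    (htight : TightChain p) (hmix : 0 < delta0 p)
    (S : ℕ → Set ℕ) (hne : ∀ n, (S n).Nonempty)
    (hrare : Tendsto (fun n => setMass pi (S n)) atTop (nhds 0)) :
    ∃ n₀ : ℕ, ∀ n ≥ n₀, ∃ lam : ℝ, ∃ f : ℕ → ℝ,
      (1 - epsSup p (S n) ≤ lam ∧ lam < 1) ∧
      (∀ i ∉ S n, ∑' k, ((S n)ᶜ).indicator (fun k => p i k * f k) k = lam * f i) ∧
      (∀ i ∉ S n, 1 ≤ f i ∧ f i ≤ 1 / (1 - (6 / delta0 p) * epsSup p (S n))) :=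
  tem_chain_principal_eigenvalue_general p pi hchain htight hmix S hne hrare
end
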